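/- For every lattice Γ in H₃(ℝ), the image p(Γ) is a lattice in ℝ², i.e. a discrete subgroup of ℝ² with compact quotient ℝ²/p(Γ); equivalently, p(Γ) = Aℤ² for some A ∈ GL₂(ℝ). -/

import Mathlib

open MeasureTheory

/-- The real Heisenberg group `H₃(ℝ)`: `ℝ³` with
`(a,b,c)·(a′,b′,c′) = (a+a′, b+b′, c+c′+a·b′)`. -/
@[ext] structure H3 : Type where
  x : ℝ
  y : ℝ
  z : ℝ

namespace H3

instance : Mul H3 := ⟨fun g h => ⟨g.x + h.x, g.y + h.y, g.z + h.z + g.x * h.y⟩⟩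
instance : One H3 := ⟨⟨0, 0, 0⟩⟩
instance : Inv H3 := ⟨fun g => ⟨-g.x, -g.y, -g.z + g.x * g.y⟩⟩

@[simp] lemma mul_x (g h : H3) : (g * h).x = g.x + h.x := rfl
@[simp] lemma mul_y (g h : H3) : (g * h).y = g.y + h.y := rfl
@[simp] lemma mul_z (g h : H3) : (g * h).z = g.z + h.z + g.x * h.y := rfl
@[simp] lemma one_x : (1 : H3).x = 0 := rfl
@[simp] lemma one_y : (1 : H3).y = 0 := rfl
@[simp] lemma one_z : (1 : H3).z = 0 := rfl
@[simp] lemma inv_x (g : H3) : g⁻¹.x = -g.x := rfl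
@[simp] lemma inv_y (g : H3) : g⁻¹.y = -g.y := rfl
@[simp] lemma inv_z (g : H3) : g⁻¹.z = -g.z + g.x * g.y := rfl

instance : Group H3 where
  mul_assoc a b c := by ext <;> simp <;> ring
  one_mul a := by ext <;> simp
  mul_one a := by ext <;> simp
  inv_mul_cancel a := by ext <;> simp

/-- The Euclidean topology on `H₃(ℝ)`. -/
instance : TopologicalSpace H3 :=
  TopologicalSpace.induced (fun g => (g.x, g.y, g.z)) inferInstance

instance : MeasurableSpace H3 := borel H3

/-- `a(t)`. -/
def Ha (t : ℝ) : H3 := ⟨t, 0, 0⟩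
/-- `b(t)`. -/
def Hb (t : ℝ) : H3 := ⟨0, t, 0⟩
/-- `c(t)`, the center. -/
def Hc (t : ℝ) : H3 := ⟨0, 0, t⟩

/-- The projection `p : H₃(ℝ) → ℝ²`. -/
def pmap (g : H3) : ℝ × ℝ := (g.x, g.y)

/-- The kernel of `p`, i.e. the center of `H₃(ℝ)`, as a subgroup. -/
def pKer : Subgroup H3 where
  carrier := {g | g.x = 0 ∧ g.y = 0}
  one_mem' := ⟨rfl, rfl⟩
  mul_mem' := by
    rintro a b ⟨ha1, ha2⟩ ⟨hb1, hb2⟩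
    exact ⟨by simp [ha1, hb1], by simp [ha2, hb2]⟩
  inv_mem' := by
    rintro a ⟨ha1, ha2⟩
    exact ⟨by simp [ha1], by simp [ha2]⟩

/-- A lattice in `H₃(ℝ)`: a discrete subgroup with compact quotient. -/
def IsLattice (Γ : Subgroup H3) : Prop :=
  DiscreteTopology Γ ∧ CompactSpace (H3 ⧸ Γ)

/-- `k_Γ`: the index of the commutator subgroup `[Γ,Γ]` in `Γ ∩ ker p`. -/
noncomputable def kIdx (Γ : Subgroup H3) : ℕ :=
  Subgroup.relIndex ⁅Γ, Γ⁆ (Γ ⊓ pKer)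

/-- The integer lattice `ℤ² ⊆ ℝ²`. -/
def intLattice : Set (ℝ × ℝ) := {v | ∃ m n : ℤ, v = ((m : ℝ), (n : ℝ))}

/-- The action of a `2×2` matrix on `ℝ²`. -/
def matVec (A : Matrix (Fin 2) (Fin 2) ℝ) (v : ℝ × ℝ) : ℝ × ℝ :=
  (A 0 0 * v.1 + A 0 1 * v.2, A 1 0 * v.1 + A 1 1 * v.2)

/-- The dual of a subset of `ℝ²`:
all vectors pairing integrally with every element of `S`. -/
def dualSet (S : Set (ℝ × ℝ)) : Set (ℝ × ℝ) :=
  {v | ∀ w ∈ S, ∃ n : ℤ, v.1 * w.1 + v.2 * w.2 = (n : ℝ)}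

end H3

open H3

/-- The image `p(Γ)` of a lattice in `H₃(ℝ)`, as an additive subgroup of `ℝ²`. -/
def H3.pSub (Γ : Subgroup H3) : AddSubgroup (ℝ × ℝ) where
  carrier := pmap '' (Γ : Set H3)
  zero_mem' := ⟨1, Γ.one_mem, by simp [pmap]⟩
  add_mem' := by
    rintro _ _ ⟨a, ha, rfl⟩ ⟨b, hb, rfl⟩
    exact ⟨a * b, Γ.mul_mem ha hb, by simp [pmap, Prod.ext_iff]⟩
  neg_mem' := by
    rintro _ ⟨a, ha, rfl⟩
    exact ⟨a⁻¹, Γ.inv_mem ha, by simp [pmap, Prod.ext_iff]⟩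
section Aux

open Metric

/-- A subgroup-like subset of `ℝ²` with isolated zero is discrete. -/
lemma aux_discrete_of_isolated {M : Type*} [SetLike M (ℝ × ℝ)] [AddSubgroupClass M (ℝ × ℝ)]
    (S : M) (h : ∃ ε > 0, ∀ v ∈ S, |v.1| < ε → |v.2| < ε → v = 0) :
    DiscreteTopology S := by
  obtain ⟨ε, hε, hiso⟩ := h
  rw [discreteTopology_iff_isOpen_singleton]
  intro a
  have : ({a} : Set S) = Subtype.val ⁻¹' (Metric.ball (a : ℝ × ℝ) ε) := by
    ext y
    simp only [Set.mem_singleton_iff, Set.mem_preimage, Metric.mem_ball]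
    constructor
    · rintro rfl; simpa using hε
    · intro hy
      have hmem : (y : ℝ × ℝ) - a ∈ S := sub_mem y.2 a.2
      have hd : dist (y : ℝ × ℝ) (a : ℝ × ℝ)
          = max |(y : ℝ × ℝ).1 - (a : ℝ × ℝ).1| |(y : ℝ × ℝ).2 - (a : ℝ × ℝ).2| := by
        rw [Prod.dist_eq, Real.dist_eq, Real.dist_eq]
      have h1 : |((y : ℝ × ℝ) - a).1| < ε := by
        have := lt_of_le_of_lt (le_max_left _ _) (hd ▸ hy); simpa using this
      have h2 : |((y : ℝ × ℝ) - a).2| < ε := by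
        have := lt_of_le_of_lt (le_max_right _ _) (hd ▸ hy); simpa using this
      exact Subtype.ext (sub_eq_zero.mp (hiso _ hmem h1 h2))
  rw [this]
  exact (continuous_subtype_val).isOpen_preimage _ Metric.isOpen_ball

/-- The embedding of `H3` into `ℝ³`. -/
def H3emb (g : H3) : ℝ × ℝ × ℝ := (g.x, g.y, g.z)

lemma continuous_H3emb : Continuous H3emb := continuous_induced_dom

lemma continuous_pmap : Continuous pmap := by
  have : pmap = (fun v : ℝ × ℝ × ℝ => (v.1, v.2.1)) ∘ H3emb := rfl
  rw [this]
  exact (continuous_fst.prodMk (continuous_fst.comp continuous_snd)).comp continuous_H3emb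

/-- From discreteness of `Γ`, the identity is isolated. -/
lemma aux_isolated (Γ : Subgroup H3) (hd : DiscreteTopology Γ) :
    ∃ ε > 0, ∀ g ∈ Γ, |g.x| < ε → |g.y| < ε → |g.z| < ε → g = 1 := by
  have h1 : ({(1 : Γ)} : Set Γ) ∈ nhds (1 : Γ) := by
    rw [nhds_discrete]; rfl
  rw [show ((1 : Γ) : Subtype (· ∈ Γ)) = ⟨(1 : H3), Γ.one_mem⟩ from rfl,
    nhds_subtype_eq_comap] at h1
  obtain ⟨V, hV, hVsub⟩ := Filter.mem_comap.mp h1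
  have h2 : nhds (1 : H3) = Filter.comap H3emb (nhds (H3emb 1)) := nhds_induced _ _
  rw [h2] at hV
  obtain ⟨W, hW, hWsub⟩ := Filter.mem_comap.mp hV
  have h0 : H3emb 1 = ((0 : ℝ), (0 : ℝ), (0 : ℝ)) := rfl
  rw [h0] at hW
  obtain ⟨ε, hε, hball⟩ := Metric.mem_nhds_iff.mp hW
  refine ⟨ε, hε, fun g hg hx hy hz => ?_⟩
  have hd1 : dist (H3emb g) ((0 : ℝ), (0 : ℝ), (0 : ℝ)) < ε := by
    have : dist (H3emb g) ((0 : ℝ), (0 : ℝ), (0 : ℝ)) = max |g.x| (max |g.y| |g.z|) := by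
      simp [H3emb, Prod.dist_eq, Real.dist_eq, Prod.norm_def, Real.norm_eq_abs]
    rw [this]
    exact max_lt hx (max_lt hy hz)
  have : g ∈ V := hWsub (hball (Metric.mem_ball.mpr hd1))
  have := hVsub (show (⟨g, hg⟩ : Γ) ∈ Subtype.val ⁻¹' V from this)
  simpa [Subtype.ext_iff] using this

end Aux
section Aux2

lemma aux_compact (Γ : Subgroup H3) (hc : CompactSpace (H3 ⧸ Γ)) :
    CompactSpace ((ℝ × ℝ) ⧸ pSub Γ) := by
  let f : H3 → (ℝ × ℝ) ⧸ pSub Γ := fun g => QuotientAddGroup.mk (pmap g)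
  let F : H3 ⧸ Γ → (ℝ × ℝ) ⧸ pSub Γ := Quotient.lift f (by
    intro a b hab
    have hab' : a⁻¹ * b ∈ Γ := (QuotientGroup.leftRel_apply).mp hab
    refine (QuotientAddGroup.eq).mpr ?_
    exact ⟨a⁻¹ * b, hab', by simp [pmap, Prod.ext_iff]⟩)
  have hFc : Continuous F := by
    apply Continuous.quotient_lift
    exact continuous_quot_mk.comp continuous_pmap
  have hFs : Function.Surjective F := by
    intro q
    induction q using QuotientAddGroup.induction_on with
    | H v => exact ⟨QuotientGroup.mk (⟨v.1, v.2, 0⟩ : H3), rfl⟩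
  have h1 : IsCompact (Set.range F) := isCompact_range hFc
  rw [Set.range_eq_univ.mpr hFs] at h1
  exact isCompact_univ_iff.mp h1

lemma aux_indep (Γ : Subgroup H3) (hc : CompactSpace ((ℝ × ℝ) ⧸ pSub Γ)) :
    ∃ γ ∈ Γ, ∃ δ ∈ Γ, γ.x * δ.y - γ.y * δ.x ≠ 0 := by
  by_contra hcon
  push_neg at hcon
  obtain ⟨c₁, c₂, hne, hker⟩ :
      ∃ c₁ c₂ : ℝ, ¬(c₁ = 0 ∧ c₂ = 0) ∧ ∀ v ∈ pSub Γ, c₁ * v.1 + c₂ * v.2 = 0 := by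
    by_cases hA : ∃ γ₀ ∈ Γ, ¬(γ₀.x = 0 ∧ γ₀.y = 0)
    · obtain ⟨γ₀, hγ₀, hγ₀ne⟩ := hA
      refine ⟨-γ₀.y, γ₀.x, ?_, ?_⟩
      · intro ⟨h1, h2⟩; exact hγ₀ne ⟨h2, neg_eq_zero.mp h1⟩
      · rintro v ⟨g, hg, rfl⟩
        have := hcon γ₀ hγ₀ g hg
        simp only [pmap]
        linarith
    · push_neg at hA
      refine ⟨1, 0, by simp, ?_⟩
      rintro v ⟨g, hg, rfl⟩
      simp [pmap, (hA g hg).1]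
  let φ : (ℝ × ℝ) →+ ℝ :=
    { toFun := fun v => c₁ * v.1 + c₂ * v.2
      map_zero' := by simp
      map_add' := by intro a b; simp; ring }
  let F : (ℝ × ℝ) ⧸ pSub Γ → ℝ := QuotientAddGroup.lift (pSub Γ) φ hker
  have hFc : Continuous F := by
    apply Continuous.quotient_lift
    show Continuous fun v : ℝ × ℝ => c₁ * v.1 + c₂ * v.2
    fun_prop
  have hFs : Function.Surjective F := by
    intro t
    rcases Classical.em (c₁ = 0) with h1 | h1
    · have h2 : c₂ ≠ 0 := fun h2 => hne ⟨h1, h2⟩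
      refine ⟨QuotientAddGroup.mk ((0 : ℝ), t / c₂), ?_⟩
      show c₁ * 0 + c₂ * (t / c₂) = t
      field_simp
      ring
    · refine ⟨QuotientAddGroup.mk ((t / c₁ : ℝ), (0 : ℝ)), ?_⟩
      show c₁ * (t / c₁) + c₂ * 0 = t
      field_simp
      ring
  have h1 : IsCompact (Set.range F) := isCompact_range hFc
  rw [Set.range_eq_univ.mpr hFs] at h1
  exact noncompact_univ ℝ h1

end Aux2
section Aux3

lemma aux_isolated_pSub (Γ : Subgroup H3) (hd : DiscreteTopology Γ)
    {γ δ : H3} (hγ : γ ∈ Γ) (hδ : δ ∈ Γ) (hD : γ.x * δ.y - γ.y * δ.x ≠ 0) :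
    ∃ r > 0, ∀ v ∈ pSub Γ, |v.1| < r → |v.2| < r → v = 0 := by
  obtain ⟨ε, hε, hiso⟩ := aux_isolated Γ hd
  have key : ∀ g ∈ Γ, ∀ h ∈ Γ, |g.x * h.y - g.y * h.x| < ε → g.x * h.y - g.y * h.x = 0 := by
    intro g hg h hh hlt
    set k := g * h * g⁻¹ * h⁻¹ with hk
    have hkΓ : k ∈ Γ := Γ.mul_mem (Γ.mul_mem (Γ.mul_mem hg hh) (Γ.inv_mem hg)) (Γ.inv_mem hh)
    have hkx : k.x = 0 := by simp [hk]
    have hky : k.y = 0 := by simp [hk]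
    have hkz : k.z = g.x * h.y - g.y * h.x := by simp [hk]; ring
    have h1 : k = 1 := hiso k hkΓ (by rw [hkx]; simpa using hε)
      (by rw [hky]; simpa using hε) (by rw [hkz]; exact hlt)
    rw [← hkz, h1, one_z]
  set M : ℝ := |γ.x| + |γ.y| + |δ.x| + |δ.y| + 1 with hM
  have hM0 : 0 < M := by positivity
  have hεM : 0 < ε / M := by positivity
  refine ⟨ε / M, hεM, ?_⟩
  rintro v ⟨g, hg, rfl⟩ h1 h2
  simp only [pmap] at h1 h2 ⊢
  have bound : ∀ h' : H3, |h'.x| + |h'.y| + 1 ≤ M →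
      |g.x * h'.y - g.y * h'.x| < ε := by
    intro h' hh'
    have t1 : |g.x * h'.y - g.y * h'.x| ≤ |g.x| * |h'.y| + |g.y| * |h'.x| := by
      have := abs_add_le (g.x * h'.y) (-(g.y * h'.x))
      rw [← sub_eq_add_neg, abs_neg, abs_mul, abs_mul] at this
      exact this
    have b1 : |g.x| * |h'.y| ≤ ε / M * |h'.y| :=
      mul_le_mul_of_nonneg_right h1.le (abs_nonneg _)
    have b2 : |g.y| * |h'.x| ≤ ε / M * |h'.x| :=
      mul_le_mul_of_nonneg_right h2.le (abs_nonneg _)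
    have hlt' : |h'.y| + |h'.x| < M := by linarith
    have h3 : ε / M * (|h'.y| + |h'.x|) < ε / M * M := mul_lt_mul_of_pos_left hlt' hεM
    rw [div_mul_cancel₀ ε (ne_of_gt hM0)] at h3
    calc |g.x * h'.y - g.y * h'.x| ≤ |g.x| * |h'.y| + |g.y| * |h'.x| := t1
      _ ≤ ε / M * |h'.y| + ε / M * |h'.x| := add_le_add b1 b2
      _ = ε / M * (|h'.y| + |h'.x|) := by ring
      _ < ε := h3
  have e1 : g.x * γ.y - g.y * γ.x = 0 := key g hg γ hγ (bound γ (by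
    rw [hM]; linarith [abs_nonneg δ.x, abs_nonneg δ.y]))
  have e2 : g.x * δ.y - g.y * δ.x = 0 := key g hg δ hδ (bound δ (by
    rw [hM]; linarith [abs_nonneg γ.x, abs_nonneg γ.y]))
  have hgx : g.x = 0 := by
    have h3 : g.x * (γ.x * δ.y - γ.y * δ.x) = 0 := by linear_combination γ.x * e2 - δ.x * e1
    exact (mul_eq_zero.mp h3).resolve_right hD
  have hgy : g.y = 0 := by
    have h3 : g.y * (γ.x * δ.y - γ.y * δ.x) = 0 := by linear_combination γ.y * e2 - δ.y * e1
    exact (mul_eq_zero.mp h3).resolve_right hD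
  simp [hgx, hgy, Prod.ext_iff]

end Aux3
open Module Submodule

/-- For every lattice `Γ` in `H₃(ℝ)`, the image `p(Γ)` is a lattice in `ℝ²`:
it is discrete with compact quotient, and equivalently `p(Γ) = Aℤ²` for some
`A ∈ GL₂(ℝ)`. -/

theorem pmap_image_is_lattice (Γ : Subgroup H3) (hΓ : IsLattice Γ) :
    DiscreteTopology (pSub Γ) ∧ CompactSpace ((ℝ × ℝ) ⧸ pSub Γ) ∧
      ∃ A : Matrix (Fin 2) (Fin 2) ℝ, A.det ≠ 0 ∧
        pmap '' (Γ : Set H3) = matVec A '' intLattice := by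
  obtain ⟨hdisc, hcomp⟩ := hΓ
  have hq : CompactSpace ((ℝ × ℝ) ⧸ pSub Γ) := aux_compact Γ hcomp
  obtain ⟨γ, hγ, δ, hδ, hD⟩ := aux_indep Γ hq
  obtain ⟨r, hr, hiso⟩ := aux_isolated_pSub Γ hdisc hγ hδ hD
  have hdS : DiscreteTopology (pSub Γ) := aux_discrete_of_isolated _ ⟨r, hr, hiso⟩
  refine ⟨hdS, hq, ?_⟩
  set L : Submodule ℤ (ℝ × ℝ) := AddSubgroup.toIntSubmodule (pSub Γ) with hLdef
  have hmemL : ∀ x : ℝ × ℝ, x ∈ L ↔ x ∈ pSub Γ := fun x => Iff.rfl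
  haveI hdL : DiscreteTopology L :=
    aux_discrete_of_isolated L ⟨r, hr, fun v hv => hiso v ((hmemL v).mp hv)⟩
  have hγL : pmap γ ∈ L := (hmemL _).mpr ⟨γ, hγ, rfl⟩
  have hδL : pmap δ ∈ L := (hmemL _).mpr ⟨δ, hδ, rfl⟩
  have hpγ : pmap γ = (γ.x, γ.y) := rfl
  have hpδ : pmap δ = (δ.x, δ.y) := rfl
  have hspan : Submodule.span ℝ (L : Set (ℝ × ℝ)) = ⊤ := by
    rw [eq_top_iff]
    rintro u -
    have hu : u = ((u.1 * δ.y - u.2 * δ.x) / (γ.x * δ.y - γ.y * δ.x)) • pmap γ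
        + ((γ.x * u.2 - γ.y * u.1) / (γ.x * δ.y - γ.y * δ.x)) • pmap δ := by
      rw [hpγ, hpδ]
      apply Prod.ext
      · simp only [Prod.fst_add, Prod.smul_fst, smul_eq_mul]
        rw [div_mul_eq_mul_div, div_mul_eq_mul_div, ← add_div, eq_div_iff hD]
        ring
      · simp only [Prod.snd_add, Prod.smul_snd, smul_eq_mul]
        rw [div_mul_eq_mul_div, div_mul_eq_mul_div, ← add_div, eq_div_iff hD]
        ring
    rw [hu]
    exact Submodule.add_mem _ (Submodule.smul_mem _ _ (Submodule.subset_span hγL))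
      (Submodule.smul_mem _ _ (Submodule.subset_span hδL))
  haveI : IsZLattice ℝ L := ⟨hspan⟩
  have hrank : Module.finrank ℤ L = 2 := by
    rw [ZLattice.rank ℝ L, Module.finrank_prod, finrank_self]
  let b : Basis (Fin 2) ℤ L := Module.finBasisOfFinrankEq ℤ L hrank
  let bR : Basis (Fin 2) ℝ (ℝ × ℝ) := b.ofZLatticeBasis ℝ L
  have hbR : ∀ i, bR i = (b i : ℝ × ℝ) := fun i => b.ofZLatticeBasis_apply ℝ L i
  set e0 : ℝ × ℝ := bR 0 with he0
  set e1 : ℝ × ℝ := bR 1 with he1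
  have he0L : e0 ∈ L := by rw [he0, hbR 0]; exact (b 0).2
  have he1L : e1 ∈ L := by rw [he1, hbR 1]; exact (b 1).2
  refine ⟨!![e0.1, e1.1; e0.2, e1.2], ?_, ?_⟩
  · rw [Matrix.det_fin_two_of]
    intro hdet
    have hind := Fintype.linearIndependent_iff.mp bR.linearIndependent
    have r1 := hind ![e1.2, -e0.2] (by
      rw [Fin.sum_univ_two]
      simp only [Matrix.cons_val_zero, Matrix.cons_val_one, Matrix.head_cons, ← he0, ← he1]
      apply Prod.ext
      · simp only [Prod.fst_add, Prod.smul_fst, smul_eq_mul, Prod.fst_zero]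
        linarith
      · simp only [Prod.snd_add, Prod.smul_snd, smul_eq_mul, Prod.snd_zero]
        ring)
    have hy1 : e1.2 = 0 := by simpa using r1 0
    have hy0 : e0.2 = 0 := by have := r1 1; simpa using this
    have r2 := hind ![e1.1, -e0.1] (by
      rw [Fin.sum_univ_two]
      simp only [Matrix.cons_val_zero, Matrix.cons_val_one, Matrix.head_cons, ← he0, ← he1]
      apply Prod.ext
      · simp only [Prod.fst_add, Prod.smul_fst, smul_eq_mul, Prod.fst_zero]
        ring
      · simp only [Prod.snd_add, Prod.smul_snd, smul_eq_mul, Prod.snd_zero, hy0, hy1]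
        ring)
    have hx1 : e1.1 = 0 := by simpa using r2 0
    have hx0 : e0.1 = 0 := by have := r2 1; simpa using this
    have : e0 = 0 := Prod.ext hx0 hy0
    exact bR.ne_zero 0 (he0 ▸ this)
  · have hset : pmap '' (Γ : Set H3) = (L : Set (ℝ × ℝ)) := rfl
    rw [hset]
    have hcomb : ∀ m n : ℤ, matVec !![e0.1, e1.1; e0.2, e1.2] ((m : ℝ), (n : ℝ))
        = m • e0 + n • e1 := by
      intro m n
      apply Prod.ext
      · simp only [matVec, Prod.fst_add, Matrix.cons_val', Matrix.cons_val_zero,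
          Matrix.cons_val_one, Matrix.head_cons, Matrix.head_fin_const, Matrix.empty_val',
          Matrix.cons_val_fin_one, Matrix.of_apply]
        rw [← Int.cast_smul_eq_zsmul ℝ m e0, ← Int.cast_smul_eq_zsmul ℝ n e1]
        simp only [Prod.smul_fst, smul_eq_mul]
        ring
      · simp only [matVec, Prod.snd_add, Matrix.cons_val', Matrix.cons_val_zero,
          Matrix.cons_val_one, Matrix.head_cons, Matrix.head_fin_const, Matrix.empty_val',
          Matrix.cons_val_fin_one, Matrix.of_apply]
        rw [← Int.cast_smul_eq_zsmul ℝ m e0, ← Int.cast_smul_eq_zsmul ℝ n e1]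
        simp only [Prod.smul_snd, smul_eq_mul]
        ring
    ext v
    constructor
    · intro hv
      have hsum := b.sum_repr ⟨v, hv⟩
      rw [Fin.sum_univ_two] at hsum
      have hval := congrArg (Subtype.val : L → ℝ × ℝ) hsum
      simp only [Submodule.coe_add, Submodule.coe_smul] at hval
      refine ⟨((b.repr ⟨v, hv⟩ 0 : ℝ), (b.repr ⟨v, hv⟩ 1 : ℝ)),
        ⟨b.repr ⟨v, hv⟩ 0, b.repr ⟨v, hv⟩ 1, rfl⟩, ?_⟩
      rw [hcomb]
      rw [he0, he1, hbR 0, hbR 1]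
      exact hval
    · rintro ⟨w, ⟨m, n, rfl⟩, rfl⟩
      rw [hcomb]
      exact Submodule.add_mem _ (Submodule.smul_mem _ _ he0L) (Submodule.smul_mem _ _ he1L)
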